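/- Let d ≥ 1, N ∈ ℕ, and α, β ∈ ℝ with α + β > d, α < d, and β < d. Then there exists C = C(d, α, β) > 0, independent of N, such that uniformly over n ∈ (N^{-1}ℤ)^d: (1/N^d) · Σ_{n₁ + n₂ = n, n₁,n₂ ∈ (N^{-1}ℤ)^d} ⟨n₁⟩^{−α} ⟨n₂⟩^{−β} ≤ C ⟨n⟩^{−(α+β−d)}, where ⟨m⟩ = sqrt(η + 4π²|m|²) for a fixed η > 0. -/

import Mathlib

/-!
Write `a = ⟨n₁⟩`, `b = ⟨n₂⟩`, `c = ⟨n⟩`. Since `|n|² ≤ 2|n₁|² + 2|n₂|²`, we have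
`c ≤ 2 max a b`. If `a ≤ b`, then `b ≥ c / 2`, so the summand `a^{-α} b^{-β}` is at most
`2^β c^{-β} a^{-α}` when `a ≤ c` and at most `a^{-(α+β)}` when `a ≥ c`; the case `b ≤ a` is
symmetric. What remains are sums of a single bracket over a sublevel or a superlevel set.
There are at most `(κ N L)^d` points of `(N⁻¹ℤ)^d` with `⟨n₁⟩ ≤ L`, so cutting the
range of the bracket into dyadic shells gives geometric series:
`Σ_{⟨n₁⟩ ≤ c} ⟨n₁⟩^{-s} ≲ N^d c^{d-s}` for `s < d`, and
`Σ_{⟨n₁⟩ ≥ c} ⟨n₁⟩^{-t} ≲ N^d c^{d-t}` for `t > d`.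
-/

open Finset Real

lemma sum_zpow_le_of_forall_le {r : ℝ} (hr : 1 < r) {T : Finset ℤ} {k₀ : ℤ}
    (hT : ∀ k ∈ T, k ≤ k₀) :
    ∑ k ∈ T, r ^ k ≤ r ^ k₀ / (1 - r⁻¹) := by
  have hr0 : 0 < r := by linarith
  have hq0 : 0 ≤ r⁻¹ := by positivity
  have hq1 : r⁻¹ < 1 := inv_lt_one_of_one_lt₀ hr
  have hinj : Set.InjOn (fun k => (k₀ - k).toNat) T := by
    intro a ha b hb hab
    have := hT a ha
    have := hT b hb
    simp only at hab
    omega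
  calc ∑ k ∈ T, r ^ k = r ^ k₀ * ∑ k ∈ T, r⁻¹ ^ (k₀ - k).toNat := by
        rw [mul_sum]
        refine sum_congr rfl fun k hk => ?_
        rw [← zpow_natCast, Int.toNat_of_nonneg (by linarith [hT k hk]), inv_zpow',
          ← zpow_add₀ hr0.ne']
        ring_nf
    _ = r ^ k₀ * ∑ n ∈ T.image (fun k => (k₀ - k).toNat), r⁻¹ ^ n := by rw [sum_image hinj]
    _ ≤ r ^ k₀ * ∑' n : ℕ, r⁻¹ ^ n := by
        gcongr
        exact (summable_geometric_of_lt_one hq0 hq1).sum_le_tsum _ fun n _ => by positivity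
    _ = r ^ k₀ / (1 - r⁻¹) := by rw [tsum_geometric_of_lt_one hq0 hq1, div_eq_mul_inv]

lemma two_zpow_rpow_comm (k : ℤ) (p : ℝ) : ((2:ℝ) ^ k) ^ p = ((2:ℝ) ^ p) ^ k := by
  rw [← rpow_intCast, ← rpow_intCast, ← rpow_mul zero_le_two, ← rpow_mul zero_le_two, mul_comm]

lemma sum_two_zpow_rpow_le_of_forall_le {p Λ : ℝ} (hp : 0 < p) (hΛ : 0 < Λ) {T : Finset ℤ}
    (hT : ∀ k ∈ T, (2:ℝ) ^ k ≤ Λ) :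
    ∑ k ∈ T, ((2:ℝ) ^ k) ^ p ≤ Λ ^ p / (1 - 2 ^ (-p)) := by
  have h2p : 1 < (2:ℝ) ^ p := one_lt_rpow one_lt_two hp
  have hk : ∀ k ∈ T, k ≤ Int.log 2 Λ := fun k hk =>
    (Int.zpow_le_iff_le_log one_lt_two hΛ).1 (by exact_mod_cast hT k hk)
  calc ∑ k ∈ T, ((2:ℝ) ^ k) ^ p = ∑ k ∈ T, ((2:ℝ) ^ p) ^ k :=
        sum_congr rfl fun k _ => two_zpow_rpow_comm k p
    _ ≤ ((2:ℝ) ^ p) ^ Int.log 2 Λ / (1 - ((2:ℝ) ^ p)⁻¹) := sum_zpow_le_of_forall_le h2p hk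
    _ ≤ Λ ^ p / (1 - 2 ^ (-p)) := by
        rw [← two_zpow_rpow_comm, ← rpow_neg zero_le_two]
        have : (2:ℝ) ^ (-p) < 1 := rpow_lt_one_of_one_lt_of_neg one_lt_two (by linarith)
        gcongr
        exact_mod_cast Int.zpow_log_le_self one_lt_two hΛ

lemma sum_two_zpow_rpow_le_of_forall_ge {p Λ : ℝ} (hp : p < 0) (hΛ : 0 < Λ) {T : Finset ℤ}
    (hT : ∀ k ∈ T, Λ ≤ (2:ℝ) ^ k) :
    ∑ k ∈ T, ((2:ℝ) ^ k) ^ p ≤ Λ ^ p / (1 - 2 ^ p) := by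
  have h := sum_two_zpow_rpow_le_of_forall_le (neg_pos.2 hp) (inv_pos.2 hΛ)
    (T := T.map (Equiv.neg ℤ).toEmbedding) fun k hk => by
      have := inv_anti₀ hΛ (hT (-k) (by simpa using hk))
      rwa [zpow_neg, inv_inv] at this
  rw [sum_map, inv_rpow hΛ.le, rpow_neg hΛ.le, inv_inv, neg_neg] at h
  convert h using 2 with k
  rw [Equiv.coe_toEmbedding, Equiv.neg_apply, two_zpow_rpow_comm k, two_zpow_rpow_comm (-k),
    rpow_neg zero_le_two, inv_zpow', neg_neg]

section LevelSets

variable {ι : Type*} {F : Finset ι} {f : ι → ℝ} {K D : ℝ}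

/-- The fibres of `Int.log 2 ∘ f` are the dyadic shells `2 ^ k ≤ f < 2 ^ (k + 1)`. -/
lemma sum_rpow_neg_le_sum_dyadic (hf : ∀ i ∈ F, 0 < f i)
    (hcount : ∀ L > 0, (#{i ∈ F | f i ≤ L} : ℝ) ≤ K * L ^ D) {s : ℝ} (hs : 0 ≤ s)
    {G : Finset ι} (hG : G ⊆ F) :
    ∑ i ∈ G, f i ^ (-s) ≤
      K * 2 ^ D * ∑ k ∈ G.image (fun i => Int.log 2 (f i)), ((2:ℝ) ^ k) ^ (D - s) := by
  rw [← sum_fiberwise_of_maps_to fun i hi => mem_image_of_mem (fun i => Int.log 2 (f i)) hi,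
    mul_sum]
  refine sum_le_sum fun k _ => ?_
  have h2k : (0:ℝ) < 2 ^ k := by positivity
  have hfiber : {i ∈ G | Int.log 2 (f i) = k} ⊆ {i ∈ F | f i ≤ 2 ^ (k + 1)} := by
    intro i hi
    rw [mem_filter] at hi ⊢
    refine ⟨hG hi.1, ?_⟩
    have := Int.lt_zpow_succ_log_self (R := ℝ) one_lt_two (f i)
    rw [hi.2] at this
    exact_mod_cast this.le
  calc ∑ i ∈ G with Int.log 2 (f i) = k, f i ^ (-s)
      ≤ #{i ∈ G | Int.log 2 (f i) = k} * ((2:ℝ) ^ k) ^ (-s) := by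
        rw [← nsmul_eq_mul]
        refine sum_le_card_nsmul _ _ _ fun i hi => ?_
        rw [mem_filter] at hi
        have := Int.zpow_log_le_self (R := ℝ) one_lt_two (hf i (hG hi.1))
        rw [hi.2] at this
        exact rpow_le_rpow_of_nonpos h2k (by exact_mod_cast this) (by linarith)
    _ ≤ K * ((2:ℝ) ^ (k + 1)) ^ D * ((2:ℝ) ^ k) ^ (-s) := by
        gcongr
        exact (Nat.cast_le.2 (card_le_card hfiber)).trans (hcount _ (by positivity))
    _ = K * 2 ^ D * ((2:ℝ) ^ k) ^ (D - s) := by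
        rw [zpow_add_one₀ two_ne_zero, mul_rpow h2k.le zero_le_two, sub_eq_add_neg,
          rpow_add h2k]
        ring

lemma sum_rpow_neg_sublevel_le (hK : 0 ≤ K) (hf : ∀ i ∈ F, 0 < f i)
    (hcount : ∀ L > 0, (#{i ∈ F | f i ≤ L} : ℝ) ≤ K * L ^ D) {s Λ : ℝ} (hs : 0 ≤ s)
    (hsD : s < D) (hΛ : 0 < Λ) :
    ∑ i ∈ F with f i ≤ Λ, f i ^ (-s) ≤ K * (2 ^ D / (1 - 2 ^ (s - D))) * Λ ^ (D - s) := by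
  calc ∑ i ∈ F with f i ≤ Λ, f i ^ (-s)
      ≤ K * 2 ^ D * ∑ k ∈ {i ∈ F | f i ≤ Λ}.image (fun i => Int.log 2 (f i)),
          ((2:ℝ) ^ k) ^ (D - s) := sum_rpow_neg_le_sum_dyadic hf hcount hs (filter_subset _ _)
    _ ≤ K * 2 ^ D * (Λ ^ (D - s) / (1 - 2 ^ (-(D - s)))) := by
        gcongr
        refine sum_two_zpow_rpow_le_of_forall_le (by linarith) hΛ ?_
        simp only [mem_image, mem_filter]
        rintro _ ⟨i, ⟨hi, hiΛ⟩, rfl⟩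
        exact (Int.zpow_log_le_self (R := ℝ) one_lt_two (hf i hi)).trans (by exact_mod_cast hiΛ)
    _ = K * (2 ^ D / (1 - 2 ^ (s - D))) * Λ ^ (D - s) := by
        rw [neg_sub]
        ring

lemma sum_rpow_neg_superlevel_le (hK : 0 ≤ K) (hf : ∀ i ∈ F, 0 < f i)
    (hcount : ∀ L > 0, (#{i ∈ F | f i ≤ L} : ℝ) ≤ K * L ^ D) {t Λ : ℝ} (ht : 0 ≤ t)
    (hDt : D < t) (hΛ : 0 < Λ) :
    ∑ i ∈ F with Λ ≤ f i, f i ^ (-t) ≤ K * (2 ^ t / (1 - 2 ^ (D - t))) * Λ ^ (D - t) := by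
  calc ∑ i ∈ F with Λ ≤ f i, f i ^ (-t)
      ≤ K * 2 ^ D * ∑ k ∈ {i ∈ F | Λ ≤ f i}.image (fun i => Int.log 2 (f i)),
          ((2:ℝ) ^ k) ^ (D - t) := sum_rpow_neg_le_sum_dyadic hf hcount ht (filter_subset _ _)
    _ ≤ K * 2 ^ D * ((Λ / 2) ^ (D - t) / (1 - 2 ^ (D - t))) := by
        gcongr
        refine sum_two_zpow_rpow_le_of_forall_ge (by linarith) (by positivity) ?_
        simp only [mem_image, mem_filter]
        rintro _ ⟨i, ⟨hi, hiΛ⟩, rfl⟩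
        have := Int.lt_zpow_succ_log_self (R := ℝ) one_lt_two (f i)
        push_cast at this
        rw [zpow_add_one₀ two_ne_zero] at this
        linarith
    _ = K * (2 ^ t / (1 - 2 ^ (D - t))) * Λ ^ (D - t) := by
        have h2 : (2:ℝ) ^ D * 2 ^ (t - D) = 2 ^ t := by rw [← rpow_add two_pos]; ring_nf
        rw [div_rpow hΛ.le zero_le_two, div_eq_mul_inv _ ((2:ℝ) ^ (D - t)),
          ← rpow_neg zero_le_two, neg_sub, ← h2]
        ring

end LevelSets

lemma rpow_neg_mul_rpow_neg_le_of_le {a b c α β : ℝ} (ha : 0 < a) (hc : 0 < c) (hβ : 0 ≤ β)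
    (hab : a ≤ b) (hcb : c ≤ 2 * b) :
    a ^ (-α) * b ^ (-β) ≤
      2 ^ β * c ^ (-β) * (if a ≤ c then a ^ (-α) else 0) +
        (if c ≤ a then a ^ (-(α + β)) else 0) := by
  rcases le_or_gt a c with hac | hac
  · have hb : b ^ (-β) ≤ 2 ^ β * c ^ (-β) :=
      calc b ^ (-β) ≤ (c / 2) ^ (-β) :=
            rpow_le_rpow_of_nonpos (by positivity) (by linarith) (by linarith)
        _ = 2 ^ β * c ^ (-β) := by
            rw [div_rpow hc.le zero_le_two, rpow_neg zero_le_two, div_inv_eq_mul, mul_comm]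
    have : 0 ≤ if c ≤ a then a ^ (-(α + β)) else 0 := by split_ifs <;> positivity
    rw [if_pos hac]
    nlinarith [rpow_pos_of_pos ha (-α)]
  · rw [if_neg hac.not_ge, if_pos hac.le, mul_zero, zero_add, neg_add, rpow_add ha]
    exact mul_le_mul_of_nonneg_left (rpow_le_rpow_of_nonpos ha hab (by linarith)) (by positivity)

lemma rpow_neg_mul_rpow_neg_le {a b c α β : ℝ} (ha : 0 < a) (hb : 0 < b) (hc : 0 < c)
    (hα : 0 ≤ α) (hβ : 0 ≤ β) (habc : c ≤ 2 * max a b) :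
    a ^ (-α) * b ^ (-β) ≤
      2 ^ β * c ^ (-β) * (if a ≤ c then a ^ (-α) else 0) +
        2 ^ α * c ^ (-α) * (if b ≤ c then b ^ (-β) else 0) +
        (if c ≤ a then a ^ (-(α + β)) else 0) + (if c ≤ b then b ^ (-(α + β)) else 0) := by
  have h₁ : 0 ≤ 2 ^ β * c ^ (-β) * (if a ≤ c then a ^ (-α) else 0) := by
    split_ifs <;> positivity
  have h₂ : 0 ≤ 2 ^ α * c ^ (-α) * (if b ≤ c then b ^ (-β) else 0) := by
    split_ifs <;> positivity
  have h₃ : 0 ≤ if c ≤ a then a ^ (-(α + β)) else 0 := by split_ifs <;> positivity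
  have h₄ : 0 ≤ if c ≤ b then b ^ (-(α + β)) else 0 := by split_ifs <;> positivity
  rcases le_total a b with hab | hba
  · have := rpow_neg_mul_rpow_neg_le_of_le (α := α) ha hc hβ hab
      (by rwa [max_eq_right hab] at habc)
    linarith
  · have := rpow_neg_mul_rpow_neg_le_of_le (α := β) hb hc hα hba
      (by rwa [max_eq_left hba] at habc)
    rw [mul_comm, add_comm β α] at this
    linarith

lemma sum_rpow_neg_mul_rpow_neg_sub_le {G : Type*} [AddCommGroup G] {g : G → ℝ} {m : G}
    {α β : ℝ} (hg : ∀ x, 0 < g x) (hα : 0 ≤ α) (hβ : 0 ≤ β)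
    (hm : ∀ x, g m ≤ 2 * max (g x) (g (m - x))) (F : Finset G) :
    ∑ x ∈ F, g x ^ (-α) * g (m - x) ^ (-β) ≤
      2 ^ β * g m ^ (-β) * ∑ x ∈ F with g x ≤ g m, g x ^ (-α) +
        2 ^ α * g m ^ (-α) * ∑ x ∈ F.map (Equiv.subLeft m).toEmbedding with g x ≤ g m,
          g x ^ (-β) +
        ∑ x ∈ F with g m ≤ g x, g x ^ (-(α + β)) +
        ∑ x ∈ F.map (Equiv.subLeft m).toEmbedding with g m ≤ g x, g x ^ (-(α + β)) := by
  refine (sum_le_sum fun x _ =>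
    rpow_neg_mul_rpow_neg_le (hg x) (hg (m - x)) (hg m) hα hβ (hm x)).trans_eq ?_
  simp only [sum_add_distrib, ← mul_sum, sum_filter, sum_map]
  rfl

section Bracket

variable {ι : Type*} [Fintype ι]

noncomputable def japaneseBracket (η : ℝ) (x : ι → ℝ) : ℝ :=
  √(η + 4 * π ^ 2 * ∑ i, x i ^ 2)

variable {η : ℝ}

lemma sqrt_le_japaneseBracket (x : ι → ℝ) : √η ≤ japaneseBracket η x :=
  sqrt_le_sqrt (le_add_of_nonneg_right (by positivity))

lemma japaneseBracket_pos (hη : 0 < η) (x : ι → ℝ) : 0 < japaneseBracket η x :=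
  (sqrt_pos.2 hη).trans_le (sqrt_le_japaneseBracket x)

lemma two_pi_mul_abs_le_japaneseBracket (hη : 0 ≤ η) (x : ι → ℝ) (i : ι) :
    2 * π * |x i| ≤ japaneseBracket η x := by
  rw [japaneseBracket, le_sqrt (by positivity) (by positivity), mul_pow, sq_abs]
  have := single_le_sum (fun j _ => sq_nonneg (x j)) (mem_univ i)
  nlinarith [pi_pos]

lemma japaneseBracket_add_le (hη : 0 ≤ η) (x y : ι → ℝ) :
    japaneseBracket η (x + y) ≤ 2 * max (japaneseBracket η x) (japaneseBracket η y) := by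
  have hsq : ∀ z : ι → ℝ, japaneseBracket η z ^ 2 = η + 4 * π ^ 2 * ∑ i, z i ^ 2 := fun z =>
    sq_sqrt (by positivity)
  have hsum : ∑ i, (x + y) i ^ 2 ≤ 2 * (∑ i, x i ^ 2 + ∑ i, y i ^ 2) := by
    rw [← sum_add_distrib, mul_sum]
    exact sum_le_sum fun i _ => add_sq_le
  have hx := le_max_left (japaneseBracket η x) (japaneseBracket η y)
  have hy := le_max_right (japaneseBracket η x) (japaneseBracket η y)
  have hx0 := (sqrt_nonneg η).trans (sqrt_le_japaneseBracket (η := η) x)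
  have hy0 := (sqrt_nonneg η).trans (sqrt_le_japaneseBracket (η := η) y)
  rw [japaneseBracket, sqrt_le_left (by positivity), mul_pow]
  nlinarith [hsq x, hsq y, pi_pos, mul_le_mul hx hx hx0 (hx0.trans hx),
    mul_le_mul hy hy hy0 (hy0.trans hy)]

end Bracket

section Lattice

variable {ι : Type*}

noncomputable def latticePoint (N : ℕ) (m : ι → ℤ) : ι → ℝ := fun i => (m i : ℝ) / N

lemma latticePoint_add_sub (N : ℕ) (m m₁ : ι → ℤ) :
    latticePoint N m₁ + latticePoint N (m - m₁) = latticePoint N m := by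
  ext i
  simp only [latticePoint, Pi.add_apply, Pi.sub_apply, Int.cast_sub]
  ring

variable [Fintype ι] {η : ℝ} {N : ℕ}

lemma natAbs_le_floor_of_japaneseBracket_le (hη : 0 ≤ η) (hN : 0 < N) {m : ι → ℤ} {L : ℝ}
    (hm : japaneseBracket η (latticePoint N m) ≤ L) (i : ι) :
    (m i).natAbs ≤ ⌊N * L / (2 * π)⌋₊ := by
  have h := (two_pi_mul_abs_le_japaneseBracket hη (latticePoint N m) i).trans hm
  rw [latticePoint, abs_div, Nat.abs_cast, ← Int.cast_abs, mul_div_assoc',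
    div_le_iff₀ (by positivity)] at h
  refine Nat.le_floor ?_
  rw [Nat.cast_natAbs, le_div_iff₀ (by positivity)]
  linarith

lemma card_japaneseBracket_latticePoint_le (hη : 0 < η) (hN : 0 < N) (F : Finset (ι → ℤ))
    {L : ℝ} (hL : 0 < L) :
    (#{m ∈ F | japaneseBracket η (latticePoint N m) ≤ L} : ℝ) ≤
      ((π⁻¹ + (√η)⁻¹) * N) ^ Fintype.card ι * L ^ (Fintype.card ι : ℝ) := by
  classical
  rw [rpow_natCast, ← mul_pow]
  rcases lt_or_ge L √η with hLη | hLη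
  · rw [filter_false_of_mem fun m _ => (hLη.trans_le (sqrt_le_japaneseBracket _)).not_ge]
    simp only [card_empty, Nat.cast_zero]
    positivity
  set R := ⌊N * L / (2 * π)⌋₊
  have hbox : {m ∈ F | japaneseBracket η (latticePoint N m) ≤ L} ⊆
      Fintype.piFinset fun _ => Icc (-(R : ℤ)) R := by
    intro m hm
    rw [Fintype.mem_piFinset]
    intro i
    have := natAbs_le_floor_of_japaneseBracket_le hη.le hN (mem_filter.1 hm).2 i
    rw [mem_Icc]
    omega
  have hcard : #(Fintype.piFinset fun _ : ι => Icc (-(R : ℤ)) R) =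
      (2 * R + 1) ^ Fintype.card ι := by
    rw [Fintype.card_piFinset, prod_const, Int.card_Icc, card_univ]
    congr 1
    omega
  have hR : (2 * R + 1 : ℝ) ≤ (π⁻¹ + (√η)⁻¹) * N * L := by
    have hN1 : (1 : ℝ) ≤ N := by exact_mod_cast hN
    have h1 : (R : ℝ) ≤ N * L / (2 * π) := Nat.floor_le (by positivity)
    have h2 : 1 ≤ N * L / √η := by
      rw [le_div_iff₀ (sqrt_pos.2 hη)]
      nlinarith
    have : (π⁻¹ + (√η)⁻¹) * N * L = 2 * (N * L / (2 * π)) + N * L / √η := by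
      field_simp
    linarith
  calc (#{m ∈ F | japaneseBracket η (latticePoint N m) ≤ L} : ℝ)
      ≤ (2 * R + 1 : ℝ) ^ Fintype.card ι := by
        exact_mod_cast (card_le_card hbox).trans hcard.le
    _ ≤ ((π⁻¹ + (√η)⁻¹) * N * L) ^ Fintype.card ι := by gcongr

theorem exists_sum_japaneseBracket_conv_le (hη : 0 < η) {α β : ℝ} (hα : 0 ≤ α) (hβ : 0 ≤ β)
    (hαn : α < Fintype.card ι) (hβn : β < Fintype.card ι) (hn : (Fintype.card ι : ℝ) < α + β) :
    ∃ C > 0, ∀ N : ℕ, 0 < N → ∀ (m : ι → ℤ) (F : Finset (ι → ℤ)),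
      ∑ m₁ ∈ F, japaneseBracket η (latticePoint N m₁) ^ (-α) *
          japaneseBracket η (latticePoint N (m - m₁)) ^ (-β) ≤
        C * N ^ Fintype.card ι *
          japaneseBracket η (latticePoint N m) ^ (-(α + β - Fintype.card ι)) := by
  set n : ℝ := (Fintype.card ι : ℝ)
  have hA : ∀ s < n, 0 < (2:ℝ) ^ n / (1 - 2 ^ (s - n)) := fun s hs =>
    div_pos (by positivity) (sub_pos.2 (rpow_lt_one_of_one_lt_of_neg one_lt_two (by linarith)))
  have hB : 0 < (2:ℝ) ^ (α + β) / (1 - 2 ^ (n - (α + β))) :=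
    div_pos (by positivity) (sub_pos.2 (rpow_lt_one_of_one_lt_of_neg one_lt_two (by linarith)))
  refine ⟨(π⁻¹ + (√η)⁻¹) ^ Fintype.card ι * (2 ^ β * (2 ^ n / (1 - 2 ^ (α - n))) +
    2 ^ α * (2 ^ n / (1 - 2 ^ (β - n))) + 2 * (2 ^ (α + β) / (1 - 2 ^ (n - (α + β))))),
    by have := hA α hαn; have := hA β hβn; positivity, fun N hN m F => ?_⟩
  set c := japaneseBracket η (latticePoint N m)
  set K := ((π⁻¹ + (√η)⁻¹) * N) ^ Fintype.card ι
  have hK : 0 ≤ K := by positivity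
  have hK_split : K = (π⁻¹ + (√η)⁻¹) ^ Fintype.card ι * (N : ℝ) ^ Fintype.card ι :=
    mul_pow _ _ _
  have hJ : ∀ x : ι → ℤ, 0 < japaneseBracket η (latticePoint N x) := fun x =>
    japaneseBracket_pos hη _
  have hcount := fun (G : Finset (ι → ℤ)) L (hL : 0 < L) =>
    card_japaneseBracket_latticePoint_le hη hN G hL
  have hsublevel := fun G (s : ℝ) (hs : 0 ≤ s) (hsn : s < n) =>
    sum_rpow_neg_sublevel_le hK (fun x _ => hJ x) (hcount G) hs hsn (hJ m)
  have hsuperlevel := fun G =>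
    sum_rpow_neg_superlevel_le hK (fun x _ => hJ x) (hcount G) (add_nonneg hα hβ) hn (hJ m)
  have hc : 0 < c := hJ m
  have e₁ : c ^ (-β) * c ^ (n - α) = c ^ (-(α + β - n)) := by rw [← rpow_add hc]; ring_nf
  have e₂ : c ^ (-α) * c ^ (n - β) = c ^ (-(α + β - n)) := by rw [← rpow_add hc]; ring_nf
  have e₃ : c ^ (n - (α + β)) = c ^ (-(α + β - n)) := by ring_nf
  have hmax : ∀ x, c ≤ 2 * max (japaneseBracket η (latticePoint N x))
      (japaneseBracket η (latticePoint N (m - x))) := fun x => by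
    have := japaneseBracket_add_le hη.le (latticePoint N x) (latticePoint N (m - x))
    rwa [latticePoint_add_sub] at this
  refine (sum_rpow_neg_mul_rpow_neg_sub_le hJ hα hβ hmax F).trans ?_
  calc _ ≤ 2 ^ β * c ^ (-β) * (K * (2 ^ n / (1 - 2 ^ (α - n))) * c ^ (n - α)) +
          2 ^ α * c ^ (-α) * (K * (2 ^ n / (1 - 2 ^ (β - n))) * c ^ (n - β)) +
          K * (2 ^ (α + β) / (1 - 2 ^ (n - (α + β)))) * c ^ (n - (α + β)) +
          K * (2 ^ (α + β) / (1 - 2 ^ (n - (α + β)))) * c ^ (n - (α + β)) := by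
        gcongr
        exacts [hsublevel F α hα hαn, hsublevel _ β hβ hβn, hsuperlevel F, hsuperlevel _]
    _ = _ := by
        linear_combination (2 ^ β * (2 ^ n / (1 - 2 ^ (α - n))) * K) * e₁ +
          (2 ^ α * (2 ^ n / (1 - 2 ^ (β - n))) * K) * e₂ +
          (2 * K * (2 ^ (α + β) / (1 - 2 ^ (n - (α + β))))) * e₃ +
          ((2 ^ β * (2 ^ n / (1 - 2 ^ (α - n))) + 2 ^ α * (2 ^ n / (1 - 2 ^ (β - n))) +
            2 * (2 ^ (α + β) / (1 - 2 ^ (n - (α + β))))) * c ^ (-(α + β - n))) * hK_split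

end Lattice

theorem discrete_convolution_bound_general (d : ℕ) (η : ℝ) (hη : 0 < η)
    (α β : ℝ) (h1 : (d : ℝ) < α + β) (h2 : α < d) (h3 : β < d) :
    ∃ C : ℝ, 0 < C ∧ ∀ (N : ℕ), 0 < N → ∀ m : Fin d → ℤ,
      (1 / (N : ℝ) ^ d) *
          ∑' m₁ : Fin d → ℤ,
            (Real.sqrt (η + 4 * Real.pi ^ 2 * ∑ i, ((m₁ i : ℝ) / N) ^ 2)) ^ (-α) *
            (Real.sqrt (η + 4 * Real.pi ^ 2 * ∑ i, (((m i - m₁ i : ℤ) : ℝ) / N) ^ 2)) ^ (-β)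
        ≤ C * (Real.sqrt (η + 4 * Real.pi ^ 2 * ∑ i, ((m i : ℝ) / N) ^ 2)) ^ (-(α + β - d)) := by
  obtain ⟨C, hC, hsum⟩ := exists_sum_japaneseBracket_conv_le (ι := Fin d) (α := α) (β := β) hη
    (by linarith) (by linarith) (by simpa using h2) (by simpa using h3) (by simpa using h1)
  refine ⟨C, hC, fun N hN m => ?_⟩
  have htsum := Real.tsum_le_of_sum_le (fun m₁ => mul_nonneg
    (rpow_nonneg (japaneseBracket_pos hη _).le _) (rpow_nonneg (japaneseBracket_pos hη _).le _))
    (hsum N hN m)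
  rw [Fintype.card_fin] at htsum
  change 1 / (N : ℝ) ^ d * ∑' m₁, japaneseBracket η (latticePoint N m₁) ^ (-α) *
      japaneseBracket η (latticePoint N (m - m₁)) ^ (-β) ≤
    C * japaneseBracket η (latticePoint N m) ^ (-(α + β - d))
  rw [one_div, inv_mul_le_iff₀ (by positivity)]
  exact htsum.trans_eq (by ring)

/-- **Bound on discrete convolutions.** Let `d ≥ 1`, `η > 0` and `α, β ∈ ℝ` with
`α + β > d`, `α < d`, `β < d`. Then there is `C = C(d, α, β) > 0`, independent of `N`,
such that uniformly over `n = m/N ∈ (N⁻¹ℤ)^d`,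
`(1/N^d) Σ_{n₁+n₂=n} ⟨n₁⟩^{−α} ⟨n₂⟩^{−β} ≤ C ⟨n⟩^{−(α+β−d)}`,
where `⟨x⟩ = sqrt(η + 4π²|x|²)`. -/
theorem discrete_convolution_bound (d : ℕ) (hd : 1 ≤ d) (η : ℝ) (hη : 0 < η)
    (α β : ℝ) (h1 : (d : ℝ) < α + β) (h2 : α < d) (h3 : β < d) :
    ∃ C : ℝ, 0 < C ∧ ∀ (N : ℕ), 0 < N → ∀ m : Fin d → ℤ,
      (1 / (N : ℝ) ^ d) *
          ∑' m₁ : Fin d → ℤ,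
            (Real.sqrt (η + 4 * Real.pi ^ 2 * ∑ i, ((m₁ i : ℝ) / N) ^ 2)) ^ (-α) *
            (Real.sqrt (η + 4 * Real.pi ^ 2 * ∑ i, (((m i - m₁ i : ℤ) : ℝ) / N) ^ 2)) ^ (-β)
        ≤ C * (Real.sqrt (η + 4 * Real.pi ^ 2 * ∑ i, ((m i : ℝ) / N) ^ 2)) ^ (-(α + β - d)) :=
  discrete_convolution_bound_general d η hη α β h1 h2 h3
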